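/- arXiv:1904.08202 — 2 statements merged into one kernel-verified Lean document; each statement's English description precedes it below -/
import Mathlib

section
/- Let X ∈ ℂ^{n×n} be Hermitian with W_d(X) ≻ 0. For a perturbation (Δ_A, Δ_B, Δ_C, Δ_D) set Δ_R := Δ_D + Δ_Dᴴ, Z_d := −[ (X/2)(A+Δ_A−I_n), (X/2)(B+Δ_B) ] ∈ ℂ^{n×(n+m)} and Y_d := (I_{n+m} + Z_dᴴZ_d)^{-1/2} ⪯ I_{n+m}. If det W_d(X; A+Δ_A, B+Δ_B, C+Δ_C, D+Δ_D) = 0 then λ_min( Y_d ( W_d(X) − [[Aᴴ+I_n],[Bᴴ]]·(X/2)·[Δ_A, Δ_B] − [[Δ_Aᴴ],[Δ_Bᴴ]]·(X/2)·[A+I_n, B] ) Y_d ) ≤ ‖ [[0, Δ_A, Δ_B],[Δ_Aᴴ, 0, Δ_Cᴴ],[Δ_Bᴴ, Δ_C, Δ_R]] ‖₂. -/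
open Matrix
open scoped ComplexOrder Matrix.Norms.L2Operator

/-!
Let `v ≠ 0` be a null vector of the perturbed matrix `W_d(X; M + Δ_M)`. Writing `X = X/2 + X/2`,
this matrix equals `H + Z_dᴴ F + Fᴴ Z_d + G` with `H` the matrix conjugated by `Y_d` in the
theorem, `F = [Δ_A, Δ_B]` and `G = [[0, Δ_Cᴴ], [Δ_C, Δ_R]]`. The last three terms form the
quadratic form of `Δ = [[0, F], [Fᴴ, G]]` at `w = (Z_d v, v)`, so `vᴴ H v = -wᴴ Δ w ≤ ‖Δ‖₂ ‖w‖²`.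
Since `‖w‖² = vᴴ (I + Z_dᴴ Z_d) v = ‖Y_d⁻¹ v‖²`, the Rayleigh quotient of `Y_d H Y_d` at
`u = Y_d⁻¹ v` is at most `‖Δ‖₂`, and it bounds `λ_min` from above.
-/

namespace Matrix

section Spectral

variable {𝕜 ι : Type*} [RCLike 𝕜] [Fintype ι] [DecidableEq ι]

open scoped MatrixOrder in
theorem IsHermitian.iInf_eigenvalues_mul_le {M : Matrix ι ι 𝕜} (hM : M.IsHermitian)
    (u : ι → 𝕜) :
    (⨅ i, hM.eigenvalues i) * RCLike.re (star u ⬝ᵥ u) ≤ RCLike.re (star u ⬝ᵥ M *ᵥ u) := by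
  have hle : algebraMap ℝ _ (⨅ i, hM.eigenvalues i) ≤ M := by
    rw [algebraMap_le_iff_le_spectrum (a := M) hM.isSelfAdjoint,
      hM.spectrum_real_eq_range_eigenvalues]
    rintro _ ⟨i, rfl⟩
    exact ciInf_le (Set.finite_range _).bddBelow i
  have := (RCLike.nonneg_iff.1 ((le_iff.1 hle).dotProduct_mulVec_nonneg u)).1
  simpa [sub_mulVec, Algebra.algebraMap_eq_smul_one, smul_mulVec, dotProduct_smul,
    RCLike.smul_re] using this

theorem norm_dotProduct_mulVec_le (Δ : Matrix ι ι 𝕜) (w : ι → 𝕜) :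
    ‖star w ⬝ᵥ Δ *ᵥ w‖ ≤ ‖Δ‖ * RCLike.re (star w ⬝ᵥ w) := by
  have hsq : RCLike.re (star w ⬝ᵥ w) = ‖WithLp.toLp 2 w‖ ^ 2 := by
    rw [← inner_self_eq_norm_sq (𝕜 := 𝕜), EuclideanSpace.inner_toLp_toLp, dotProduct_comm]
  rw [hsq, dotProduct_comm, ← EuclideanSpace.inner_toLp_toLp]
  calc _ ≤ ‖WithLp.toLp 2 w‖ * ‖WithLp.toLp 2 (Δ *ᵥ w)‖ := norm_inner_le_norm _ _
    _ ≤ ‖WithLp.toLp 2 w‖ * (‖Δ‖ * ‖WithLp.toLp 2 w‖) :=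
      mul_le_mul_of_nonneg_left (Δ.l2_opNorm_mulVec (WithLp.toLp 2 w)) (norm_nonneg _)
    _ = _ := by ring

theorem PosSemidef.isHermitian_cfc_sqrt {A : Matrix ι ι 𝕜} (hA : A.PosSemidef) :
    (hA.1.cfc Real.sqrt).IsHermitian := by
  rw [← hA.1.cfc_eq]
  exact cfc_predicate _ _

theorem PosSemidef.cfc_sqrt_mul_self {A : Matrix ι ι 𝕜} (hA : A.PosSemidef) :
    hA.1.cfc Real.sqrt * hA.1.cfc Real.sqrt = A := by
  rw [← hA.1.cfc_eq, ← cfc_mul _ _ A]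
  conv_rhs => rw [← cfc_id' ℝ A hA.1]
  refine cfc_congr fun x hx => Real.mul_self_sqrt ?_
  rw [hA.1.spectrum_real_eq_range_eigenvalues] at hx
  obtain ⟨i, rfl⟩ := hx
  exact hA.eigenvalues_nonneg i

end Spectral

section PerturbationBound

variable {𝕜 ι κ : Type*} [RCLike 𝕜] [Fintype ι] [Fintype κ]

theorem star_sumElim_dotProduct_fromBlocks_mulVec (Z F : Matrix κ ι 𝕜) (G : Matrix ι ι 𝕜)
    (v : ι → 𝕜) :
    star (Z *ᵥ v ⊕ᵥ v) ⬝ᵥ fromBlocks 0 F Fᴴ G *ᵥ (Z *ᵥ v ⊕ᵥ v)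
      = star v ⬝ᵥ (Zᴴ * F + Fᴴ * Z + G) *ᵥ v := by
  rw [fromBlocks_mulVec, Function.star_sumElim, sumElim_dotProduct_sumElim]
  simp only [Sum.elim_comp_inl, Sum.elim_comp_inr, zero_mulVec, zero_add, add_mulVec,
    dotProduct_add, ← mulVec_mulVec, dotProduct_mulVec (star v) Zᴴ, ← star_mulVec, add_assoc]

theorem star_sumElim_dotProduct_sumElim [DecidableEq ι] (Z : Matrix κ ι 𝕜) (v : ι → 𝕜) :
    star (Z *ᵥ v ⊕ᵥ v) ⬝ᵥ (Z *ᵥ v ⊕ᵥ v) = star v ⬝ᵥ (1 + Zᴴ * Z) *ᵥ v := by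
  rw [Function.star_sumElim, sumElim_dotProduct_sumElim, add_mulVec, one_mulVec, dotProduct_add,
    ← mulVec_mulVec, dotProduct_mulVec (star v) Zᴴ, ← star_mulVec, add_comm]

theorem iInf_eigenvalues_le_norm_fromBlocks_of_det_eq_zero [DecidableEq ι] [DecidableEq κ]
    {H G S : Matrix ι ι 𝕜} {Z F : Matrix κ ι 𝕜} (hS : S.IsHermitian)
    (hSS : S * S = 1 + Zᴴ * Z) (hSHS : (S⁻¹ * H * S⁻¹).IsHermitian)
    (hdet : (H + Zᴴ * F + Fᴴ * Z + G).det = 0) :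
    ⨅ i, hSHS.eigenvalues i ≤ ‖fromBlocks 0 F Fᴴ G‖ := by
  obtain ⟨v, hv, hWv⟩ := exists_mulVec_eq_zero_iff.mpr hdet
  have hSdet : IsUnit S.det := by
    have h := (PosDef.one.add_posSemidef (posSemidef_conjTranspose_mul_self Z)).det_pos.ne'
    rw [← hSS, det_mul] at h
    exact (left_ne_zero_of_mul h).isUnit
  set u := S *ᵥ v
  set w := Z *ᵥ v ⊕ᵥ v
  have hSu : S⁻¹ *ᵥ u = v := by rw [mulVec_mulVec, nonsing_inv_mul S hSdet, one_mulVec]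
  have hu : u ≠ 0 := fun h => hv (by rw [← hSu, h, mulVec_zero])
  have hquad : star u ⬝ᵥ (S⁻¹ * H * S⁻¹) *ᵥ u = star v ⬝ᵥ H *ᵥ v := by
    rw [← mulVec_mulVec, hSu, ← mulVec_mulVec, dotProduct_mulVec, ← hS.inv.eq, ← star_mulVec,
      hSu]
  have hnorm : star u ⬝ᵥ u = star w ⬝ᵥ w := by
    rw [star_sumElim_dotProduct_sumElim, ← hSS, star_mulVec, hS.eq, ← dotProduct_mulVec,
      mulVec_mulVec]
  have hHv : star v ⬝ᵥ H *ᵥ v = -(star w ⬝ᵥ fromBlocks 0 F Fᴴ G *ᵥ w) := by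
    rw [star_sumElim_dotProduct_fromBlocks_mulVec, eq_neg_iff_add_eq_zero, ← dotProduct_add,
      ← add_mulVec, ← add_assoc, ← add_assoc, hWv, dotProduct_zero]
  have hpos : 0 < RCLike.re (star u ⬝ᵥ u) :=
    (RCLike.pos_iff.1 (dotProduct_star_self_pos_iff.2 hu)).1
  refine le_of_mul_le_mul_right ?_ hpos
  calc (⨅ i, hSHS.eigenvalues i) * RCLike.re (star u ⬝ᵥ u)
      ≤ RCLike.re (star u ⬝ᵥ (S⁻¹ * H * S⁻¹) *ᵥ u) := hSHS.iInf_eigenvalues_mul_le u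
    _ = -RCLike.re (star w ⬝ᵥ fromBlocks 0 F Fᴴ G *ᵥ w) := by rw [hquad, hHv, map_neg]
    _ ≤ ‖star w ⬝ᵥ fromBlocks 0 F Fᴴ G *ᵥ w‖ := (neg_le_abs _).trans (RCLike.abs_re_le_norm _)
    _ ≤ ‖fromBlocks 0 F Fᴴ G‖ * RCLike.re (star u ⬝ᵥ u) := by
      rw [hnorm]
      exact norm_dotProduct_mulVec_le _ w

end PerturbationBound

section DiscretePassivity

variable {R ι κ : Type*} [CommRing R] [StarRing R] [Fintype ι]

def discretePassivityMatrix (X A : Matrix ι ι R) (B : Matrix ι κ R) (C : Matrix κ ι R)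
    (D : Matrix κ κ R) : Matrix (ι ⊕ κ) (ι ⊕ κ) R :=
  fromBlocks (X - Aᴴ * X * A) (Cᴴ - Aᴴ * X * B) (C - Bᴴ * X * A) ((D + Dᴴ) - Bᴴ * X * B)

theorem discretePassivityMatrix_add [DecidableEq ι] {X X₂ : Matrix ι ι R} (hX₂ : X₂ᴴ = X₂)
    (hX₂X : X₂ + X₂ = X) (A ΔA : Matrix ι ι R) (B ΔB : Matrix ι κ R) (C ΔC : Matrix κ ι R)
    (D ΔD : Matrix κ κ R) :
    discretePassivityMatrix X (A + ΔA) (B + ΔB) (C + ΔC) (D + ΔD)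
      = (discretePassivityMatrix X A B C D - fromRows (Aᴴ + 1) Bᴴ * X₂ * fromCols ΔA ΔB
          - fromRows ΔAᴴ ΔBᴴ * X₂ * fromCols (A + 1) B)
        + (-fromCols (X₂ * (A + ΔA - 1)) (X₂ * (B + ΔB)))ᴴ * fromCols ΔA ΔB
        + (fromCols ΔA ΔB)ᴴ * -fromCols (X₂ * (A + ΔA - 1)) (X₂ * (B + ΔB))
        + fromBlocks 0 ΔCᴴ ΔC (ΔD + ΔDᴴ) := by
  subst hX₂X
  simp only [discretePassivityMatrix, conjTranspose_neg,
    conjTranspose_fromCols_eq_fromRows_conjTranspose, Matrix.neg_mul, Matrix.mul_neg,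
    Matrix.mul_assoc, fromRows_mul, mul_fromCols, fromCols_fromRows_eq_fromBlocks,
    fromBlocks_neg, sub_eq_add_neg, fromBlocks_add]
  rw [fromBlocks_inj]
  refine ⟨?_, ?_, ?_, ?_⟩ <;>
  · simp only [conjTranspose_mul, conjTranspose_add, conjTranspose_neg, hX₂, Matrix.mul_add,
      Matrix.add_mul, Matrix.neg_mul, Matrix.mul_neg, Matrix.mul_one, Matrix.one_mul,
      Matrix.mul_assoc, neg_add_rev, neg_neg]
    abel

end DiscretePassivity

end Matrix

theorem analytic_center_passivity_radius_lower_bound_discrete_general {n m : ℕ}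
    (A : Matrix (Fin n) (Fin n) ℂ) (B : Matrix (Fin n) (Fin m) ℂ)
    (C : Matrix (Fin m) (Fin n) ℂ) (D : Matrix (Fin m) (Fin m) ℂ)
    (X : Matrix (Fin n) (Fin n) ℂ) (hX : X.IsHermitian)
    (ΔA : Matrix (Fin n) (Fin n) ℂ) (ΔB : Matrix (Fin n) (Fin m) ℂ)
    (ΔC : Matrix (Fin m) (Fin n) ℂ) (ΔD : Matrix (Fin m) (Fin m) ℂ)
    (Zd : Matrix (Fin n) (Fin n ⊕ Fin m) ℂ)
    (hZd : Zd = -(fromCols (((2 : ℂ)⁻¹ • X) * (A + ΔA - 1)) (((2 : ℂ)⁻¹ • X) * (B + ΔB))))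
    (hIZ : (1 + Zdᴴ * Zd).PosDef)
    (Yd : Matrix (Fin n ⊕ Fin m) (Fin n ⊕ Fin m) ℂ)
    (hYd : Yd = (hIZ.posSemidef.1.cfc Real.sqrt)⁻¹)
    (hdet : (fromBlocks (X - (A + ΔA)ᴴ * X * (A + ΔA)) ((C + ΔC)ᴴ - (A + ΔA)ᴴ * X * (B + ΔB))
        ((C + ΔC) - (B + ΔB)ᴴ * X * (A + ΔA))
        (((D + ΔD) + (D + ΔD)ᴴ) - (B + ΔB)ᴴ * X * (B + ΔB))).det = 0)
    (hH : (Yd * (fromBlocks (X - Aᴴ * X * A) (Cᴴ - Aᴴ * X * B)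
          (C - Bᴴ * X * A) ((D + Dᴴ) - Bᴴ * X * B)
        - fromRows (Aᴴ + 1) Bᴴ * ((2 : ℂ)⁻¹ • X) * fromCols ΔA ΔB
        - fromRows ΔAᴴ ΔBᴴ * ((2 : ℂ)⁻¹ • X) * fromCols (A + 1) B) * Yd).IsHermitian) :
    (⨅ i, hH.eigenvalues i) ≤
      ‖fromBlocks (0 : Matrix (Fin n) (Fin n) ℂ) (fromCols ΔA ΔB)
        (fromRows ΔAᴴ ΔBᴴ) (fromBlocks 0 ΔCᴴ ΔC (ΔD + ΔDᴴ))‖ := by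
  have hX₂ : ((2 : ℂ)⁻¹ • X)ᴴ = (2 : ℂ)⁻¹ • X := by
    rw [conjTranspose_smul, hX.eq, star_inv₀, star_ofNat]
  have hX₂X : (2 : ℂ)⁻¹ • X + (2 : ℂ)⁻¹ • X = X := by
    rw [← add_smul]
    norm_num
  change (discretePassivityMatrix X (A + ΔA) (B + ΔB) (C + ΔC) (D + ΔD)).det = 0 at hdet
  rw [discretePassivityMatrix_add hX₂ hX₂X] at hdet
  subst hYd hZd
  simpa only [conjTranspose_fromCols_eq_fromRows_conjTranspose] using
    iInf_eigenvalues_le_norm_fromBlocks_of_det_eq_zero hIZ.posSemidef.isHermitian_cfc_sqrt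
      hIZ.posSemidef.cfc_sqrt_mul_self hH hdet

/-- lower bound for the discrete-time X-passivity radius.
If `W_d(X) ≻ 0`, `Z_d := -[(X/2)(A+ΔA-I), (X/2)(B+ΔB)]`, `Y_d := (I + Z_dᴴZ_d)^{-1/2}`,
and `det W_d(X; M + Δ_M) = 0`, then
`λ_min(Y_d (W_d(X) - [[Aᴴ+I],[Bᴴ]](X/2)[ΔA, ΔB] - [[ΔAᴴ],[ΔBᴴ]](X/2)[A+I, B]) Y_d)
  ≤ ‖[[0, ΔA, ΔB],[ΔAᴴ, 0, ΔCᴴ],[ΔBᴴ, ΔC, ΔR]]‖₂`. -/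
theorem analytic_center_passivity_radius_lower_bound_discrete {n m : ℕ}
    (A : Matrix (Fin n) (Fin n) ℂ) (B : Matrix (Fin n) (Fin m) ℂ)
    (C : Matrix (Fin m) (Fin n) ℂ) (D : Matrix (Fin m) (Fin m) ℂ)
    (X : Matrix (Fin n) (Fin n) ℂ) (hX : X.IsHermitian)
    (hW : (fromBlocks (X - Aᴴ * X * A) (Cᴴ - Aᴴ * X * B)
        (C - Bᴴ * X * A) ((D + Dᴴ) - Bᴴ * X * B)).PosDef)
    (ΔA : Matrix (Fin n) (Fin n) ℂ) (ΔB : Matrix (Fin n) (Fin m) ℂ)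
    (ΔC : Matrix (Fin m) (Fin n) ℂ) (ΔD : Matrix (Fin m) (Fin m) ℂ)
    (Zd : Matrix (Fin n) (Fin n ⊕ Fin m) ℂ)
    (hZd : Zd = -(fromCols (((2 : ℂ)⁻¹ • X) * (A + ΔA - 1)) (((2 : ℂ)⁻¹ • X) * (B + ΔB))))
    (hIZ : (1 + Zdᴴ * Zd).PosDef)
    (Yd : Matrix (Fin n ⊕ Fin m) (Fin n ⊕ Fin m) ℂ)
    (hYd : Yd = (hIZ.posSemidef.1.cfc Real.sqrt)⁻¹)
    (hdet : (fromBlocks (X - (A + ΔA)ᴴ * X * (A + ΔA)) ((C + ΔC)ᴴ - (A + ΔA)ᴴ * X * (B + ΔB))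
        ((C + ΔC) - (B + ΔB)ᴴ * X * (A + ΔA))
        (((D + ΔD) + (D + ΔD)ᴴ) - (B + ΔB)ᴴ * X * (B + ΔB))).det = 0)
    (hH : (Yd * (fromBlocks (X - Aᴴ * X * A) (Cᴴ - Aᴴ * X * B)
          (C - Bᴴ * X * A) ((D + Dᴴ) - Bᴴ * X * B)
        - fromRows (Aᴴ + 1) Bᴴ * ((2 : ℂ)⁻¹ • X) * fromCols ΔA ΔB
        - fromRows ΔAᴴ ΔBᴴ * ((2 : ℂ)⁻¹ • X) * fromCols (A + 1) B) * Yd).IsHermitian) :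
    (⨅ i, hH.eigenvalues i) ≤
      ‖fromBlocks (0 : Matrix (Fin n) (Fin n) ℂ) (fromCols ΔA ΔB)
        (fromRows ΔAᴴ ΔBᴴ) (fromBlocks 0 ΔCᴴ ΔC (ΔD + ΔDᴴ))‖ :=
  analytic_center_passivity_radius_lower_bound_discrete_general A B C D X hX ΔA ΔB ΔC ΔD Zd hZd hIZ
    Yd hYd hdet hH
end

section
/- Let A ∈ ℂ^{n×n}, B ∈ ℂ^{n×m}, C ∈ ℂ^{m×n}, D ∈ ℂ^{m×m}, R := D + Dᴴ, and let X ∈ ℂ^{n×n} be Hermitian with R − BᴴXB ≻ 0 and P_d := X − AᴴXA − F_dᴴ(R − BᴴXB)F_d ≻ 0, where F_d := (R − BᴴXB)⁻¹(C − BᴴXA). Set A_{F_d} := A − BF_d. Then the following are equivalent: (i) Re tr( W_d(X)⁻¹ · [[AᴴΔA − Δ, AᴴΔB],[BᴴΔA, BᴴΔB]] ) = 0 for every Hermitian Δ ∈ ℂ^{n×n}; (ii) A_{F_d} P_d⁻¹ A_{F_d}ᴴ − P_d⁻¹ + B (R − BᴴXB)⁻¹ Bᴴ = 0. -/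
/-!
Writing `S := R − BᴴXB`, the definitions of `F_d` and `P_d` say exactly that
`W_d(X) = [[P_d + F_dᴴ S F_d, F_dᴴ S], [S F_d, S]]`, a congruence of `diag(P_d, S)` by a unipotent
block matrix, so `V := W_d(X)⁻¹` is explicit. The pairing of `V` with the increment of `W_d` in
direction `Δ` is `tr(L V Lᴴ Δ) − tr(V₁₁ Δ)` for `L = [A B]`, which for this `V` is `tr(M Δ)` with
`M` the Stein residual of (ii). As `M` is Hermitian, testing against `Δ = M` gives `tr(M²) = 0`.
-/

open Matrix
open scoped ComplexOrder

namespace Matrix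

variable {ι κ α : Type*} [Fintype ι] [Fintype κ]

theorem trace_fromBlocks [AddCommMonoid α] (A : Matrix ι ι α) (B : Matrix ι κ α)
    (C : Matrix κ ι α) (D : Matrix κ κ α) :
    (fromBlocks A B C D).trace = A.trace + D.trace := by
  simp [trace, Fintype.sum_sum_type]

theorem trace_fromBlocks_mul_fromBlocks_stein [CommRing α] (V₁₁ : Matrix ι ι α)
    (V₁₂ : Matrix ι κ α) (V₂₁ : Matrix κ ι α) (V₂₂ : Matrix κ κ α) (A A' Δ : Matrix ι ι α)
    (B : Matrix ι κ α) (B' : Matrix κ ι α) :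
    (fromBlocks V₁₁ V₁₂ V₂₁ V₂₂ *
        fromBlocks (A' * Δ * A - Δ) (A' * Δ * B) (B' * Δ * A) (B' * Δ * B)).trace =
      ((A * V₁₁ * A' + A * V₁₂ * B' + B * V₂₁ * A' + B * V₂₂ * B' - V₁₁) * Δ).trace := by
  have hsplit : fromBlocks (A' * Δ * A - Δ) (A' * Δ * B) (B' * Δ * A) (B' * Δ * B) =
      fromRows A' B' * (Δ * fromCols A B) - fromBlocks Δ 0 0 0 := by
    rw [mul_fromCols, fromRows_mul_fromCols]
    ext (_ | _) (_ | _) <;> simp [Matrix.mul_assoc]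
  have hcycle : (fromBlocks V₁₁ V₁₂ V₂₁ V₂₂ * (fromRows A' B' * (Δ * fromCols A B))).trace =
      (fromCols A B * fromBlocks V₁₁ V₁₂ V₂₁ V₂₂ * fromRows A' B' * Δ).trace := by
    rw [Matrix.mul_assoc (fromCols A B * _), Matrix.mul_assoc (fromCols A B),
      trace_mul_comm (fromCols A B)]
    simp only [Matrix.mul_assoc]
  rw [hsplit, mul_sub, trace_sub, hcycle, fromCols_mul_fromBlocks, fromCols_mul_fromRows,
    fromBlocks_multiply, trace_fromBlocks]
  simp only [Matrix.add_mul, Matrix.sub_mul, Matrix.mul_zero, trace_add, trace_sub, trace_zero,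
    Matrix.mul_assoc]
  ring

theorem inv_fromBlocks_add_mul_mul [CommRing α] [DecidableEq ι] [DecidableEq κ]
    {P : Matrix ι ι α} {S : Matrix κ κ α} (hP : IsUnit P.det) (hS : IsUnit S.det)
    (F : Matrix κ ι α) (G : Matrix ι κ α) :
    (fromBlocks (P + G * S * F) (G * S) (S * F) S)⁻¹ =
      fromBlocks P⁻¹ (-(P⁻¹ * G)) (-(F * P⁻¹)) (S⁻¹ + F * P⁻¹ * G) := by
  refine inv_eq_right_inv ?_
  rw [fromBlocks_multiply, ← fromBlocks_one]
  congr 1 <;>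
    simp only [Matrix.add_mul, Matrix.mul_add, Matrix.mul_neg, Matrix.mul_assoc,
      mul_nonsing_inv _ hP, mul_nonsing_inv _ hS, mul_nonsing_inv_cancel_left _ _ hP,
      Matrix.mul_one] <;>
    abel

theorem IsHermitian.forall_re_trace_mul_eq_zero_iff {𝕜 : Type*} [RCLike 𝕜]
    {M : Matrix ι ι 𝕜} (hM : M.IsHermitian) :
    (∀ Δ : Matrix ι ι 𝕜, Δ.IsHermitian → RCLike.re (M * Δ).trace = 0) ↔ M = 0 := by
  refine ⟨fun h => ?_, fun h Δ _ => by simp [h]⟩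
  have hre : RCLike.re (Mᴴ * M).trace = 0 := by simpa only [hM.eq] using h M hM
  have him : RCLike.im (Mᴴ * M).trace = 0 :=
    (RCLike.nonneg_iff.mp (posSemidef_conjTranspose_mul_self M).trace_nonneg).2
  exact trace_conjTranspose_mul_self_eq_zero_iff.mp
    (RCLike.ext (by simpa using hre) (by simpa using him))

end Matrix

theorem critical_point_iff_stein_equation_discrete_general {n m : ℕ}
    (A : Matrix (Fin n) (Fin n) ℂ) (B : Matrix (Fin n) (Fin m) ℂ)
    (C : Matrix (Fin m) (Fin n) ℂ)
    (X : Matrix (Fin n) (Fin n) ℂ) (hX : X.IsHermitian)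
    (R : Matrix (Fin m) (Fin m) ℂ)
    (hRd : (R - Bᴴ * X * B).PosDef)
    (F : Matrix (Fin m) (Fin n) ℂ) (hF : F = (R - Bᴴ * X * B)⁻¹ * (C - Bᴴ * X * A))
    (P : Matrix (Fin n) (Fin n) ℂ)
    (hP : P = X - Aᴴ * X * A - Fᴴ * (R - Bᴴ * X * B) * F)
    (hPpd : P.PosDef)
    (AF : Matrix (Fin n) (Fin n) ℂ) (hAF : AF = A - B * F) :
    (∀ Δ : Matrix (Fin n) (Fin n) ℂ, Δ.IsHermitian →
        ((fromBlocks (X - Aᴴ * X * A) (Cᴴ - Aᴴ * X * B)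
            (C - Bᴴ * X * A) (R - Bᴴ * X * B))⁻¹ *
          fromBlocks (Aᴴ * Δ * A - Δ) (Aᴴ * Δ * B) (Bᴴ * Δ * A) (Bᴴ * Δ * B)).trace.re = 0)
      ↔ AF * P⁻¹ * AFᴴ - P⁻¹ + B * (R - Bᴴ * X * B)⁻¹ * Bᴴ = 0 := by
  set S := R - Bᴴ * X * B
  have hS : IsUnit S.det := (isUnit_iff_isUnit_det S).mp hRd.isUnit
  have hP_unit : IsUnit P.det := (isUnit_iff_isUnit_det P).mp hPpd.isUnit
  have hSF : C - Bᴴ * X * A = S * F := by rw [hF, mul_nonsing_inv_cancel_left _ _ hS]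
  have hFS : Cᴴ - Aᴴ * X * B = Fᴴ * S := by
    simpa [conjTranspose_sub, conjTranspose_mul, hX.eq, hRd.isHermitian.eq, Matrix.mul_assoc]
      using congrArg conjTranspose hSF
  have hPF : X - Aᴴ * X * A = P + Fᴴ * S * F := by rw [hP]; abel
  have hresidual : A * P⁻¹ * Aᴴ + A * -(P⁻¹ * Fᴴ) * Bᴴ + B * -(F * P⁻¹) * Aᴴ +
      B * (S⁻¹ + F * P⁻¹ * Fᴴ) * Bᴴ - P⁻¹ = AF * P⁻¹ * AFᴴ - P⁻¹ + B * S⁻¹ * Bᴴ := by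
    simp only [hAF, conjTranspose_sub, conjTranspose_mul, Matrix.mul_add, Matrix.add_mul,
      Matrix.mul_neg, Matrix.neg_mul, Matrix.mul_sub, Matrix.sub_mul, Matrix.mul_assoc]
    abel
  have hherm : (AF * P⁻¹ * AFᴴ - P⁻¹ + B * S⁻¹ * Bᴴ).IsHermitian :=
    ((isHermitian_mul_mul_conjTranspose AF hPpd.isHermitian.inv).sub hPpd.isHermitian.inv).add
      (isHermitian_mul_mul_conjTranspose B hRd.isHermitian.inv)
  rw [hPF, hSF, hFS, inv_fromBlocks_add_mul_mul hP_unit hS]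
  simp_rw [trace_fromBlocks_mul_fromBlocks_stein, hresidual]
  simpa only [RCLike.re_to_complex] using hherm.forall_re_trace_mul_eq_zero_iff

/-- characterization of critical points of the discrete-time
barrier function: the gradient condition
`Re tr(W_d(X)⁻¹ · [[AᴴΔA − Δ, AᴴΔB],[BᴴΔA, BᴴΔB]]) = 0` for all Hermitian `Δ`
is equivalent to the Stein equation
`A_{F_d} P_d⁻¹ A_{F_d}ᴴ − P_d⁻¹ + B (R − BᴴXB)⁻¹ Bᴴ = 0`. -/
theorem critical_point_iff_stein_equation_discrete {n m : ℕ}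
    (A : Matrix (Fin n) (Fin n) ℂ) (B : Matrix (Fin n) (Fin m) ℂ)
    (C : Matrix (Fin m) (Fin n) ℂ) (D : Matrix (Fin m) (Fin m) ℂ)
    (X : Matrix (Fin n) (Fin n) ℂ) (hX : X.IsHermitian)
    (R : Matrix (Fin m) (Fin m) ℂ) (hR : R = D + Dᴴ)
    (hRd : (R - Bᴴ * X * B).PosDef)
    (F : Matrix (Fin m) (Fin n) ℂ) (hF : F = (R - Bᴴ * X * B)⁻¹ * (C - Bᴴ * X * A))
    (P : Matrix (Fin n) (Fin n) ℂ)
    (hP : P = X - Aᴴ * X * A - Fᴴ * (R - Bᴴ * X * B) * F)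
    (hPpd : P.PosDef)
    (AF : Matrix (Fin n) (Fin n) ℂ) (hAF : AF = A - B * F) :
    (∀ Δ : Matrix (Fin n) (Fin n) ℂ, Δ.IsHermitian →
        ((fromBlocks (X - Aᴴ * X * A) (Cᴴ - Aᴴ * X * B)
            (C - Bᴴ * X * A) (R - Bᴴ * X * B))⁻¹ *
          fromBlocks (Aᴴ * Δ * A - Δ) (Aᴴ * Δ * B) (Bᴴ * Δ * A) (Bᴴ * Δ * B)).trace.re = 0)
      ↔ AF * P⁻¹ * AFᴴ - P⁻¹ + B * (R - Bᴴ * X * B)⁻¹ * Bᴴ = 0 :=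
  critical_point_iff_stein_equation_discrete_general A B C X hX R hRd F hF P hP hPpd AF hAF
end
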